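/- arXiv:1405.7007 — 3 statements merged into one kernel-verified Lean document; each statement's English description precedes it below -/
import Mathlib

section
/- Let ρ ≥ 2, v ∈ ℝ^d with |v| = 1, and A = I_d + (ρ-2)vv*. Let M, a₁, a₂ be symmetric positive definite d×d real matrices, and let ā > 0 be such that a₁ - ā·I_d and a₂ - ā·I_d are positive semidefinite. Then Tr[A((I_d - A⁻¹M)a₁ + (I_d - M⁻¹A)a₂)] ≤ ((1 ∨ (ρ-1))² / (4ā(1 ∧ (ρ-1)))) · Tr[(a₁ - a₂)²]. -/
/-!
Write `sᵢ = √aᵢ`. Expanding `0 ≤ tr(Xᴴ M X)` for `X = s₁ - M⁻¹ A s₂` shows that the left-hand side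
is at most `tr(A (s₁ - s₂)²) ≤ (ρ - 1) tr((s₁ - s₂)²)`, since `A` has eigenvalues `1` and `ρ - 1`.
The square root is Lipschitz in the Hilbert–Schmidt norm on `{a ≥ ā}`: with `S = s₁ - s₂` and
`B = a₁ - a₂` one has `tr(S B) = tr(s₁ S²) + tr(s₂ S²) ≥ 2 √ā tr(S²)`, and Young's inequality gives
`4 ā tr(S²) ≤ tr(B²)`.
-/

open Matrix

open scoped MatrixOrder ComplexOrder

namespace Matrix

variable {n 𝕜 : Type*} [Fintype n] [RCLike 𝕜]

lemma isStarProjection_vecMulVec_star {R : Type*} [Semiring R] [StarRing R] {v : n → R}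
    (hv : star v ⬝ᵥ v = 1) : IsStarProjection (vecMulVec v (star v)) where
  isIdempotentElem := by rw [IsIdempotentElem, vecMulVec_mul_vecMulVec, hv, one_smul]
  isSelfAdjoint := by rw [IsSelfAdjoint, star_eq_conjTranspose, conjTranspose_vecMulVec, star_star]

lemma PosSemidef.trace_mul_nonneg {P Q : Matrix n n 𝕜} (hP : P.PosSemidef) (hQ : Q.PosSemidef) :
    0 ≤ (P * Q).trace := by
  classical
  obtain ⟨B, rfl⟩ := CStarAlgebra.nonneg_iff_eq_star_mul_self.mp hQ.nonneg
  rw [← Matrix.mul_assoc, trace_mul_comm]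
  simpa [star_eq_conjTranspose, Matrix.mul_assoc] using
    (hP.mul_mul_conjTranspose_same B).trace_nonneg

lemma trace_mul_le_trace_mul_of_le {P P' Q : Matrix n n 𝕜} (hP : P ≤ P') (hQ : 0 ≤ Q) :
    (P * Q).trace ≤ (P' * Q).trace := by
  have := (le_iff.mp hP).trace_mul_nonneg hQ.posSemidef
  rwa [Matrix.sub_mul, trace_sub, sub_nonneg] at this

variable [DecidableEq n]

lemma trace_mul_le_of_le_smul_one {P Q : Matrix n n ℝ} {c : ℝ} (hP : P ≤ c • 1) (hQ : 0 ≤ Q) :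
    (P * Q).trace ≤ c * Q.trace := by
  simpa [smul_mul, trace_smul] using trace_mul_le_trace_mul_of_le hP hQ

lemma le_trace_mul_of_smul_one_le {P Q : Matrix n n ℝ} {c : ℝ} (hP : c • 1 ≤ P) (hQ : 0 ≤ Q) :
    c * Q.trace ≤ (P * Q).trace := by
  simpa [smul_mul, trace_smul] using trace_mul_le_trace_mul_of_le hP hQ

lemma four_mul_sq_mul_trace_sq_sub_le {s₁ s₂ : Matrix n n ℝ} {c : ℝ} (hc : 0 ≤ c)
    (h₁ : c • 1 ≤ s₁) (h₂ : c • 1 ≤ s₂) :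
    4 * c ^ 2 * ((s₁ - s₂) ^ 2).trace ≤ ((s₁ ^ 2 - s₂ ^ 2) ^ 2).trace := by
  have hc1 : 0 ≤ c • (1 : Matrix n n ℝ) := smul_nonneg hc zero_le_one
  have hS : IsSelfAdjoint (s₁ - s₂) :=
    (hc1.trans h₁).isSelfAdjoint.sub (hc1.trans h₂).isSelfAdjoint
  have hB : IsSelfAdjoint (s₁ ^ 2 - s₂ ^ 2) :=
    (hc1.trans h₁).isSelfAdjoint.pow 2 |>.sub ((hc1.trans h₂).isSelfAdjoint.pow 2)
  set S := s₁ - s₂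
  set B := s₁ ^ 2 - s₂ ^ 2
  have hSB : (S * B).trace = (s₁ * S ^ 2).trace + (s₂ * S ^ 2).trace := by
    have : S * B = S * (s₁ * S) + S ^ 2 * s₂ := by simp only [S, B]; noncomm_ring
    rw [this, trace_add, trace_mul_comm, Matrix.mul_assoc, trace_mul_comm (S ^ 2), sq]
  have hlow₁ := le_trace_mul_of_smul_one_le h₁ hS.sq_nonneg
  have hlow₂ := le_trace_mul_of_smul_one_le h₂ hS.sq_nonneg
  have hyoung : c * (S * B).trace ≤ c ^ 2 * (S ^ 2).trace + 1 / 4 * (B ^ 2).trace := by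
    have := ((IsSelfAdjoint.all c).smul hS |>.sub
      ((IsSelfAdjoint.all (1 / 2 : ℝ)).smul hB)).sq_nonneg.posSemidef.trace_nonneg
    simp only [sq, sub_mul, mul_sub, smul_mul, Matrix.mul_smul, trace_sub, trace_smul,
      smul_eq_mul, trace_mul_comm B S] at this ⊢
    linarith
  have hcSB : c * (2 * c * (S ^ 2).trace) ≤ c * (S * B).trace :=
    mul_le_mul_of_nonneg_left (by linarith) hc
  linarith

lemma smul_one_le_cfcSqrt {a : Matrix n n ℝ} {c : ℝ} (hc : 0 ≤ c) (h : c ^ 2 • 1 ≤ a) :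
    c • 1 ≤ CFC.sqrt a := by
  have ha : 0 ≤ a := (smul_nonneg (sq_nonneg c) zero_le_one).trans h
  rw [← Algebra.algebraMap_eq_smul_one] at h ⊢
  rw [CFC.sqrt_eq_real_sqrt a, cfcₙ_eq_cfc]
  refine algebraMap_le_cfc _ _ _ fun x hx => ?_
  rw [← Real.sqrt_sq hc]
  exact Real.sqrt_le_sqrt ((algebraMap_le_iff_le_spectrum (ha := ha.isSelfAdjoint)).mp h x hx)

lemma four_mul_trace_sq_sub_cfcSqrt_le {a₁ a₂ : Matrix n n ℝ} {c : ℝ} (hc : 0 ≤ c)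
    (h₁ : c • 1 ≤ a₁) (h₂ : c • 1 ≤ a₂) :
    4 * c * ((CFC.sqrt a₁ - CFC.sqrt a₂) ^ 2).trace ≤ ((a₁ - a₂) ^ 2).trace := by
  have ha₁ : 0 ≤ a₁ := (smul_nonneg hc zero_le_one).trans h₁
  have ha₂ : 0 ≤ a₂ := (smul_nonneg hc zero_le_one).trans h₂
  rw [← Real.sq_sqrt hc] at h₁ h₂
  have := four_mul_sq_mul_trace_sq_sub_le (Real.sqrt_nonneg c)
    (smul_one_le_cfcSqrt (Real.sqrt_nonneg c) h₁) (smul_one_le_cfcSqrt (Real.sqrt_nonneg c) h₂)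
  rwa [Real.sq_sqrt hc, CFC.sq_sqrt a₁, CFC.sq_sqrt a₂] at this

lemma trace_mul_le_trace_mul_sub_sq {A M s₁ s₂ : Matrix n n 𝕜} (hA : A.IsHermitian)
    (hA' : IsUnit A) (hM : M.PosDef) (hs₁ : s₁.IsHermitian) (hs₂ : s₂.IsHermitian) :
    (A * ((1 - A⁻¹ * M) * s₁ ^ 2 + (1 - M⁻¹ * A) * s₂ ^ 2)).trace ≤
      (A * (s₁ - s₂) ^ 2).trace := by
  have hAdet : IsUnit A.det := (isUnit_iff_isUnit_det A).mp hA'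
  have hMdet : IsUnit M.det := (isUnit_iff_isUnit_det M).mp hM.isUnit
  set X := s₁ - M⁻¹ * A * s₂
  have hXH : Xᴴ = s₁ - s₂ * A * M⁻¹ := by
    simp only [X, conjTranspose_sub, conjTranspose_mul, conjTranspose_nonsing_inv, hs₁.eq,
      hs₂.eq, hA.eq, hM.isHermitian.eq, Matrix.mul_assoc]
  have hX : 0 ≤ (Xᴴ * M * X).trace := (hM.posSemidef.conjTranspose_mul_mul_same X).trace_nonneg
  have hXMX : (Xᴴ * M * X).trace = (M * s₁ * s₁).trace - (A * s₁ * s₂).trace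
      - (A * s₂ * s₁).trace + (A * M⁻¹ * A * s₂ * s₂).trace := by
    rw [hXH]
    simp only [X, sub_mul, Matrix.mul_sub, Matrix.mul_assoc, mul_nonsing_inv_cancel_left _ _ hMdet,
      nonsing_inv_mul_cancel_left _ _ hMdet, trace_sub]
    rw [trace_mul_comm s₁, trace_mul_comm s₁, trace_mul_comm s₂, trace_mul_comm s₂]
    simp only [Matrix.mul_assoc]
    abel
  have hlhs : (A * ((1 - A⁻¹ * M) * s₁ ^ 2 + (1 - M⁻¹ * A) * s₂ ^ 2)).trace =
      (A * s₁ * s₁).trace + (A * s₂ * s₂).trace - (M * s₁ * s₁).trace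
        - (A * M⁻¹ * A * s₂ * s₂).trace := by
    simp only [sq, Matrix.mul_add, Matrix.sub_mul, Matrix.mul_sub, Matrix.one_mul, Matrix.mul_assoc,
      mul_nonsing_inv_cancel_left _ _ hAdet, trace_add, trace_sub]
    abel
  have hrhs : (A * (s₁ - s₂) ^ 2).trace = (A * s₁ * s₁).trace + (A * s₂ * s₂).trace
      - (A * s₁ * s₂).trace - (A * s₂ * s₁).trace := by
    simp only [sq, Matrix.mul_sub, Matrix.sub_mul, trace_sub, Matrix.mul_assoc]
    abel
  rw [← sub_nonneg]
  convert hX using 1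
  rw [hXMX, hlhs, hrhs]
  abel

end Matrix

theorem stmt0_general {d : ℕ} (ρ : ℝ) (hρ : 2 ≤ ρ) (v : Fin d → ℝ)
    (hv : ∑ i, v i ^ 2 = 1)
    (M a1 a2 : Matrix (Fin d) (Fin d) ℝ)
    (hM : M.PosDef)
    (abar : ℝ) (habar : 0 < abar)
    (h1 : (a1 - abar • (1 : Matrix (Fin d) (Fin d) ℝ)).PosSemidef)
    (h2 : (a2 - abar • (1 : Matrix (Fin d) (Fin d) ℝ)).PosSemidef) :
    Matrix.trace ((1 + (ρ - 2) • Matrix.vecMulVec v v) *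
        ((1 - (1 + (ρ - 2) • Matrix.vecMulVec v v)⁻¹ * M) * a1 +
         (1 - M⁻¹ * (1 + (ρ - 2) • Matrix.vecMulVec v v)) * a2)) ≤
      (max 1 (ρ - 1)) ^ 2 / (4 * abar * (min 1 (ρ - 1))) *
        Matrix.trace ((a1 - a2) ^ 2) := by
  set A := 1 + (ρ - 2) • vecMulVec v v
  have hP : IsStarProjection (vecMulVec v v) := by
    simpa using isStarProjection_vecMulVec_star (v := v) (by simpa [dotProduct, sq] using hv)
  have hA : A.PosDef := PosDef.one.add_posSemidef (smul_nonneg (by linarith) hP.nonneg).posSemidef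
  have hA_le : A ≤ (ρ - 1) • 1 := by
    have : (ρ - 1) • 1 - A = (ρ - 2) • (1 - vecMulVec v v) := by module
    exact sub_nonneg.mp (this ▸ smul_nonneg (by linarith) hP.one_sub_nonneg)
  have h₁ : abar • 1 ≤ a1 := le_iff.mpr h1
  have h₂ : abar • 1 ≤ a2 := le_iff.mpr h2
  have ha₁ : 0 ≤ a1 := (smul_nonneg habar.le zero_le_one).trans h₁
  have ha₂ : 0 ≤ a2 := (smul_nonneg habar.le zero_le_one).trans h₂
  have hS := (CFC.sqrt_nonneg a1).isSelfAdjoint.sub (CFC.sqrt_nonneg a2).isSelfAdjoint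
  calc _ = (A * ((1 - A⁻¹ * M) * CFC.sqrt a1 ^ 2 + (1 - M⁻¹ * A) * CFC.sqrt a2 ^ 2)).trace := by
        rw [CFC.sq_sqrt a1, CFC.sq_sqrt a2]
    _ ≤ (A * (CFC.sqrt a1 - CFC.sqrt a2) ^ 2).trace :=
        trace_mul_le_trace_mul_sub_sq hA.isHermitian hA.isUnit hM
          (CFC.sqrt_nonneg a1).posSemidef.isHermitian (CFC.sqrt_nonneg a2).posSemidef.isHermitian
    _ ≤ (ρ - 1) * ((CFC.sqrt a1 - CFC.sqrt a2) ^ 2).trace :=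
        trace_mul_le_of_le_smul_one hA_le hS.sq_nonneg
    _ ≤ (ρ - 1) / (4 * abar) * ((a1 - a2) ^ 2).trace := by
        rw [div_mul_eq_mul_div, le_div_iff₀ (by positivity), mul_assoc, mul_comm _ (4 * abar)]
        exact mul_le_mul_of_nonneg_left (four_mul_trace_sq_sub_cfcSqrt_le habar.le h₁ h₂)
          (by linarith)
    _ ≤ _ := by
        rw [max_eq_right (by linarith), min_eq_left (by linarith), mul_one]
        have hB := (ha₁.isSelfAdjoint.sub ha₂.isSelfAdjoint).sq_nonneg.posSemidef.trace_nonneg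
        gcongr ?_ / _ * _
        nlinarith

/-- Key lemma on pseudo-distances between matrices. -/
theorem stmt0 {d : ℕ} (ρ : ℝ) (hρ : 2 ≤ ρ) (v : Fin d → ℝ)
    (hv : ∑ i, v i ^ 2 = 1)
    (M a1 a2 : Matrix (Fin d) (Fin d) ℝ)
    (hM : M.PosDef) (ha1 : a1.PosDef) (ha2 : a2.PosDef)
    (abar : ℝ) (habar : 0 < abar)
    (h1 : (a1 - abar • (1 : Matrix (Fin d) (Fin d) ℝ)).PosSemidef)
    (h2 : (a2 - abar • (1 : Matrix (Fin d) (Fin d) ℝ)).PosSemidef) :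
    Matrix.trace ((1 + (ρ - 2) • Matrix.vecMulVec v v) *
        ((1 - (1 + (ρ - 2) • Matrix.vecMulVec v v)⁻¹ * M) * a1 +
         (1 - M⁻¹ * (1 + (ρ - 2) • Matrix.vecMulVec v v)) * a2)) ≤
      (max 1 (ρ - 1)) ^ 2 / (4 * abar * (min 1 (ρ - 1))) *
        Matrix.trace ((a1 - a2) ^ 2) :=
  stmt0_general ρ hρ v hv M a1 a2 hM abar habar h1 h2
end

section
/- Let ρ > 2, let r, K > 0, and let ψ : ℝ^d → ℝ be locally bounded with ψ(x) = sup_{y ∈ B(K)} (−|x−y|^ρ − ζ(y)) for all x in the closed ball B(r), where ζ : B(K) → ℝ is bounded. Then there exists a finite constant C_r such that x ↦ ψ(x) + C_r(|x|² + |x|^ρ) is convex on B(r). -/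
/-!
If `‖x - y‖ ≤ R` on a convex set, `x ↦ ‖x - y‖ ^ ρ` is semiconcave there: on a segment
`w = t • x + u • z` its concavity defect is at most `ρ² R^(ρ-2) t u ‖x - z‖²`. Indeed, write
`A = ‖x - y‖`, `B = ‖z - y‖`, `W = ‖w - y‖` and expand `A ^ ρ`, `B ^ ρ` to second order
around `W`, using that `(s ^ ρ)'' ≤ ρ (ρ - 1) R^(ρ-2)` on `[0, R]`. Both remainders are
controlled by the exact identity
`t (A - W)² + u (B - W)² + 2 W (t A + u B - W) = t u ‖x - z‖²`, whose last term is
nonnegative by the triangle inequality.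
So every `x ↦ -‖x - y‖ ^ ρ - ζ y` is strongly convex with the negative modulus
`-2 ρ² R^(ρ-2)`, a supremum keeps a common modulus, and `ψ + C ‖x‖²` is convex on `B(r)`.
-/

namespace Real

theorem rpow_tangent_le {x y e : ℝ} (hx : 0 ≤ x) (hy : 0 ≤ y) (he : 1 ≤ e) :
    x ^ e + e * x ^ (e - 1) * (y - x) ≤ y ^ e := by
  rcases hx.eq_or_lt with rfl | hx
  · rcases he.eq_or_lt with rfl | he
    · simp
    · simpa [zero_rpow (by linarith : e ≠ 0), zero_rpow (by linarith : e - 1 ≠ 0)]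
        using rpow_nonneg hy e
  have bernoulli : 1 + e * (y / x - 1) ≤ (y / x) ^ e := by
    simpa using one_add_mul_self_le_rpow_one_add (by linarith [div_nonneg hy hx.le] :
      -1 ≤ y / x - 1) he
  calc x ^ e + e * x ^ (e - 1) * (y - x) = x ^ e * (1 + e * (y / x - 1)) := by
        rw [rpow_sub_one hx.ne']; field_simp
    _ ≤ x ^ e * (y / x) ^ e := by gcongr
    _ = y ^ e := by rw [← mul_rpow hx.le (div_nonneg hy hx.le), mul_div_cancel₀ _ hx.ne']

theorem rpow_sub_one_le_mul {x R ρ : ℝ} (hρ : 2 ≤ ρ) (hx : 0 ≤ x) (hxR : x ≤ R) :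
    x ^ (ρ - 1) ≤ R ^ (ρ - 2) * x := by
  calc x ^ (ρ - 1) = x ^ (ρ - 2) * x := by
        rw [← rpow_add_one' hx (by linarith)]; ring_nf
    _ ≤ R ^ (ρ - 2) * x := by gcongr

theorem rpow_sub_one_sub_rpow_sub_one_le {α β R ρ : ℝ} (hρ : 2 ≤ ρ) (hα : 0 ≤ α)
    (hαβ : α ≤ β) (hβR : β ≤ R) :
    β ^ (ρ - 1) - α ^ (ρ - 1) ≤ (ρ - 1) * R ^ (ρ - 2) * (β - α) := by
  have hβ : 0 ≤ β := hα.trans hαβ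
  have tangent := rpow_tangent_le hβ hα (by linarith : 1 ≤ ρ - 1)
  have hmono : β ^ (ρ - 2) ≤ R ^ (ρ - 2) := rpow_le_rpow hβ hβR (by linarith)
  rw [show ρ - 1 - 1 = ρ - 2 by ring] at tangent
  nlinarith [mul_le_mul_of_nonneg_right hmono (sub_nonneg.2 hαβ)]

theorem rpow_le_tangent_add_sq {α β R ρ : ℝ} (hρ : 2 ≤ ρ) (hα : 0 ≤ α) (hαR : α ≤ R)
    (hβ : 0 ≤ β) (hβR : β ≤ R) :
    β ^ ρ ≤ α ^ ρ + ρ * α ^ (ρ - 1) * (β - α) + ρ * (ρ - 1) * R ^ (ρ - 2) * (β - α) ^ 2 := by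
  have tangent := rpow_tangent_le hβ hα (by linarith : 1 ≤ ρ)
  have lipschitz :
      (β - α) * (β ^ (ρ - 1) - α ^ (ρ - 1)) ≤ (ρ - 1) * R ^ (ρ - 2) * (β - α) ^ 2 := by
    rcases le_total α β with hαβ | hβα
    · nlinarith [rpow_sub_one_sub_rpow_sub_one_le hρ hα hαβ hβR, sub_nonneg.2 hαβ]
    · nlinarith [rpow_sub_one_sub_rpow_sub_one_le hρ hβ hβα hαR, sub_nonneg.2 hβα]
  nlinarith

end Real

open Real

theorem ConvexOn.rpow {E : Type*} [AddCommMonoid E] [Module ℝ E] {s : Set E} {f : E → ℝ}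
    {p : ℝ} (hf : ConvexOn ℝ s f) (hf₀ : ∀ x ∈ s, 0 ≤ f x) (hp : 1 ≤ p) :
    ConvexOn ℝ s fun x => f x ^ p := by
  refine ⟨hf.1, fun x hx y hy a b ha hb hab => ?_⟩
  calc f (a • x + b • y) ^ p ≤ (a * f x + b * f y) ^ p :=
        rpow_le_rpow (hf₀ _ (hf.1 hx hy ha hb hab)) (hf.2 hx hy ha hb hab) (by linarith)
    _ ≤ a * f x ^ p + b * f y ^ p :=
        (convexOn_rpow hp).2 (hf₀ x hx) (hf₀ y hy) ha hb hab

theorem norm_smul_add_smul_sq {E : Type*} [NormedAddCommGroup E] [InnerProductSpace ℝ E]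
    (x y : E) {a b : ℝ} (hab : a + b = 1) :
    ‖a • x + b • y‖ ^ 2 = a * ‖x‖ ^ 2 + b * ‖y‖ ^ 2 - a * b * ‖x - y‖ ^ 2 := by
  rw [norm_add_sq_real, norm_sub_sq_real, norm_smul, norm_smul, real_inner_smul_left,
    real_inner_smul_right, mul_pow, mul_pow, Real.norm_eq_abs, Real.norm_eq_abs, sq_abs, sq_abs]
  obtain rfl := eq_sub_of_add_eq hab
  ring

section InnerProductSpace

variable {E : Type*} [NormedAddCommGroup E] [InnerProductSpace ℝ E]

theorem strongConcaveOn_norm_sub_rpow {s : Set E} {y : E} {ρ R : ℝ} (hρ : 2 ≤ ρ)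
    (hs : Convex ℝ s) (hR : ∀ x ∈ s, ‖x - y‖ ≤ R) :
    StrongConcaveOn s (-(2 * (ρ ^ 2 * R ^ (ρ - 2)))) fun x => ‖x - y‖ ^ ρ := by
  refine ⟨hs, fun x hx z hz t u ht hu htu => ?_⟩
  have hw_sub : t • x + u • z - y = t • (x - y) + u • (z - y) := by
    rw [smul_sub, smul_sub, sub_add_sub_comm, ← add_smul, htu, one_smul]
  set W := ‖t • x + u • z - y‖ with hW
  set A := ‖x - y‖
  set B := ‖z - y‖
  set L := ‖x - z‖
  have hA₀ : 0 ≤ A := norm_nonneg _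
  have hB₀ : 0 ≤ B := norm_nonneg _
  have hW₀ : 0 ≤ W := norm_nonneg _
  have hWR : W ≤ R := hR _ (hs hx hz ht hu htu)
  have hR₀ : 0 ≤ R ^ (ρ - 2) := rpow_nonneg (hA₀.trans (hR x hx)) _
  have hδ : 0 ≤ t * A + u * B - W := by
    have : W ≤ ‖t • (x - y)‖ + ‖u • (z - y)‖ := by
      rw [hW, hw_sub]; exact norm_add_le _ _
    rw [norm_smul, norm_smul, norm_of_nonneg ht, norm_of_nonneg hu] at this
    linarith
  have hW_sq : W ^ 2 = t * A ^ 2 + u * B ^ 2 - t * u * L ^ 2 := by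
    rw [hW, hw_sub, norm_smul_add_smul_sq _ _ htu, sub_sub_sub_cancel_right]
  -- Expanding `A ^ ρ` and `B ^ ρ` around `W`, the zeroth-order terms cancel since `t + u = 1`.
  have expansion : t * A ^ ρ + u * B ^ ρ - W ^ ρ ≤ ρ * R ^ (ρ - 2) * W * (t * A + u * B - W) +
      ρ * (ρ - 1) * R ^ (ρ - 2) * (t * (A - W) ^ 2 + u * (B - W) ^ 2) := by
    have tA := mul_le_mul_of_nonneg_left (rpow_le_tangent_add_sq hρ hW₀ hWR hA₀ (hR x hx)) ht
    have tB := mul_le_mul_of_nonneg_left (rpow_le_tangent_add_sq hρ hW₀ hWR hB₀ (hR z hz)) hu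
    have first_order := mul_le_mul_of_nonneg_left
      (mul_le_mul_of_nonneg_right (rpow_sub_one_le_mul hρ hW₀ hWR) hδ) (by linarith : 0 ≤ ρ)
    linear_combination tA + tB + first_order + (W ^ ρ - ρ * W ^ (ρ - 1) * W) * htu
  have hsplit : t * (A - W) ^ 2 + u * (B - W) ^ 2 + 2 * (W * (t * A + u * B - W)) =
      t * u * L ^ 2 := by
    linear_combination (W ^ 2) * htu - hW_sq
  have hρ' : 0 ≤ ρ * (2 * ρ - 3) := by nlinarith
  show t * A ^ ρ + u * B ^ ρ + t * u * (-(2 * (ρ ^ 2 * R ^ (ρ - 2))) / 2 * L ^ 2) ≤ W ^ ρ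
  linear_combination expansion + ρ * (ρ - 1) * R ^ (ρ - 2) * hsplit +
    mul_nonneg hR₀ (mul_nonneg hρ' (mul_nonneg hW₀ hδ)) +
    mul_nonneg (mul_nonneg hR₀ (by linarith : 0 ≤ ρ)) (by positivity : 0 ≤ t * u * L ^ 2)

end InnerProductSpace

theorem uniformConvexOn_of_eq_csSup {E ι : Type*} [NormedAddCommGroup E] [NormedSpace ℝ E]
    {s : Set E} {φ : ℝ → ℝ} {I : Set ι} {F : ι → E → ℝ} {g : E → ℝ} (hI : I.Nonempty)
    (hbdd : ∀ x ∈ s, BddAbove ((F · x) '' I)) (hg : ∀ x ∈ s, g x = sSup ((F · x) '' I))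
    (hF : ∀ i ∈ I, UniformConvexOn s φ (F i)) :
    UniformConvexOn s φ g := by
  obtain ⟨i₀, hi₀⟩ := hI
  refine ⟨(hF i₀ hi₀).1, fun x hx z hz a b ha hb hab => ?_⟩
  have hF_le : ∀ i ∈ I, ∀ x ∈ s, F i x ≤ g x := fun i hi x hx =>
    hg x hx ▸ le_csSup (hbdd x hx) ⟨i, hi, rfl⟩
  rw [hg _ ((hF i₀ hi₀).1 hx hz ha hb hab)]
  refine csSup_le ⟨_, i₀, hi₀, rfl⟩ ?_
  rintro _ ⟨i, hi, rfl⟩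
  calc F i (a • x + b • z) ≤ a • F i x + b • F i z - a * b * φ ‖x - z‖ :=
        (hF i hi).2 hx hz ha hb hab
    _ ≤ a • g x + b • g z - a * b * φ ‖x - z‖ := by
      gcongr
      · exact hF_le i hi x hx
      · exact hF_le i hi z hz

open Metric

theorem stmt9 {d : ℕ} (ρ r K : ℝ) (hρ : 2 < ρ) (hr : 0 < r) (hK : 0 < K)
    (ψ ζ : EuclideanSpace ℝ (Fin d) → ℝ)
    (hζ : ∃ Cζ : ℝ, ∀ y ∈ Metric.closedBall (0 : EuclideanSpace ℝ (Fin d)) K, |ζ y| ≤ Cζ)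
    (hψ : ∀ x ∈ Metric.closedBall (0 : EuclideanSpace ℝ (Fin d)) r,
      ψ x = sSup ((fun y => -‖x - y‖ ^ ρ - ζ y) ''
        Metric.closedBall (0 : EuclideanSpace ℝ (Fin d)) K)) :
    ∃ Cr : ℝ, ConvexOn ℝ (Metric.closedBall (0 : EuclideanSpace ℝ (Fin d)) r)
      (fun x => ψ x + Cr * (‖x‖ ^ (2 : ℕ) + ‖x‖ ^ ρ)) := by
  obtain ⟨Cζ, hCζ⟩ := hζ
  have hball : Convex ℝ (closedBall (0 : EuclideanSpace ℝ (Fin d)) r) := convex_closedBall 0 r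
  have hdist : ∀ y ∈ closedBall (0 : EuclideanSpace ℝ (Fin d)) K, ∀ x ∈ closedBall 0 r,
      ‖x - y‖ ≤ r + K := fun y hy x hx =>
    (norm_sub_le x y).trans <|
      add_le_add (mem_closedBall_zero_iff.1 hx) (mem_closedBall_zero_iff.1 hy)
  set C := ρ ^ 2 * (r + K) ^ (ρ - 2)
  have hC : 0 ≤ C := by have := rpow_nonneg (by linarith : 0 ≤ r + K) (ρ - 2); positivity
  have hψ_strong : StrongConvexOn (closedBall 0 r) (-(2 * C)) ψ := by
    refine uniformConvexOn_of_eq_csSup (F := fun y x => -‖x - y‖ ^ ρ - ζ y)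
      ⟨0, mem_closedBall_self hK.le⟩ (fun x _ => ⟨Cζ, ?_⟩) hψ fun y hy => ?_
    · rintro _ ⟨y, hy, rfl⟩
      linarith [(abs_le.1 (hCζ y hy)).1, rpow_nonneg (norm_nonneg (x - y)) ρ]
    · have h := (strongConcaveOn_norm_sub_rpow hρ.le hball (hdist y hy)).neg.sub
        (concaveOn_const (ζ y) hball).uniformConcaveOn_zero
      rw [add_zero] at h
      exact h
  have h_rpow : ConvexOn ℝ (closedBall 0 r) fun x : EuclideanSpace ℝ (Fin d) => ‖x‖ ^ ρ :=
    (convexOn_norm hball).rpow (fun _ _ => norm_nonneg _) (by linarith)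
  refine ⟨C, ((strongConvexOn_iff_convex.1 hψ_strong).add (h_rpow.smul hC)).congr fun x _ => ?_⟩
  simp only [Pi.add_apply, smul_eq_mul]
  ring
end

section
/- Fix T > 0, β > 1, and for N ≥ 1 let t_i = (i/N)^β T for 0 ≤ i ≤ N and τ_s = t_i for s ∈ [t_i, t_{i+1}). Then there exists a finite constant C (depending on T, β) such that for all N ≥ 1, ∫₀^T min((s-τ_s)²/s + 1/N², s-τ_s) ds ≤ C/N². -/
/-!
In the coordinate `s ^ β⁻¹` the grid `t_i = (i / N) ^ β * T` is uniform with step `T ^ β⁻¹ / N`.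
The tangent-line (Bernoulli) bound for `x ↦ x ^ β` then gives
`s - τ s ≤ β * s ^ (1 - β⁻¹) * T ^ β⁻¹ / N` on `(0, T)`, hence
`(s - τ s) ^ 2 / s ≤ β ^ 2 * s ^ (1 - 2 / β) * T ^ (2 / β) / N ^ 2`. Since `β > 1` the exponent
`1 - 2 / β` exceeds `-1`, so this is integrable at `0`, and the first branch of the `min` alone
already yields the `O(1 / N ^ 2)` bound.
-/

open MeasureTheory Set

theorem rpow_sub_rpow_le_mul_sub {β u v : ℝ} (hβ : 1 ≤ β) (hv : 0 ≤ v) (hvu : v ≤ u) :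
    u ^ β - v ^ β ≤ β * u ^ (β - 1) * (u - v) := by
  rcases hvu.eq_or_lt with rfl | hvu
  · simp
  have hu : 0 < u := hv.trans_lt hvu
  have bernoulli := one_add_mul_self_le_rpow_one_add
    (by linarith [div_nonneg hv hu.le] : -1 ≤ v / u - 1) hβ
  rw [add_sub_cancel, Real.div_rpow hv hu.le, le_div_iff₀ (by positivity)] at bernoulli
  have hpow : u ^ β = u ^ (β - 1) * u := by
    rw [← Real.rpow_add_one hu.ne', sub_add_cancel]
  rw [hpow] at bernoulli ⊢
  field_simp at bernoulli
  nlinarith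

theorem sub_le_of_rpow_inv_sub_le {β s t h : ℝ} (hβ : 1 ≤ β) (ht : 0 ≤ t) (hts : t ≤ s)
    (hh : s ^ β⁻¹ - t ^ β⁻¹ ≤ h) : s - t ≤ β * s ^ (1 - β⁻¹) * h := by
  have hβ0 : β ≠ 0 := by positivity
  have hs : 0 ≤ s := ht.trans hts
  have tangent := rpow_sub_rpow_le_mul_sub hβ (Real.rpow_nonneg ht β⁻¹)
    (Real.rpow_le_rpow ht hts (by positivity))
  rw [Real.rpow_inv_rpow hs hβ0, Real.rpow_inv_rpow ht hβ0, ← Real.rpow_mul hs,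
    inv_mul_eq_div, sub_div, div_self hβ0, one_div] at tangent
  exact tangent.trans (by gcongr)

theorem sq_sub_div_le_of_rpow_inv_sub_le {β s t h : ℝ} (hβ : 1 ≤ β) (hs : 0 < s) (ht : 0 ≤ t)
    (hts : t ≤ s) (hh : s ^ β⁻¹ - t ^ β⁻¹ ≤ h) :
    (s - t) ^ 2 / s ≤ β ^ 2 * s ^ (1 - 2 * β⁻¹) * h ^ 2 := by
  have hsq : (s ^ (1 - β⁻¹)) ^ 2 = s ^ (1 - 2 * β⁻¹) * s := by
    rw [sq, ← Real.rpow_add hs, ← Real.rpow_add_one hs.ne']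
    ring_nf
  rw [div_le_iff₀ hs]
  calc (s - t) ^ 2 ≤ (β * s ^ (1 - β⁻¹) * h) ^ 2 :=
        pow_le_pow_left₀ (by linarith) (sub_le_of_rpow_inv_sub_le hβ ht hts hh) 2
    _ = β ^ 2 * s ^ (1 - 2 * β⁻¹) * h ^ 2 * s := by rw [mul_pow, mul_pow, hsq]; ring

theorem exists_mem_Ico_rpow_grid {T β s : ℝ} (hT : 0 < T) (hβ : 0 < β) {N : ℕ} (hN : 0 < N)
    (hs : 0 ≤ s) (hsT : s < T) :
    ∃ i < N, s ∈ Ico (((i : ℝ) / N) ^ β * T) ((((i : ℝ) + 1) / N) ^ β * T) ∧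
      s ^ β⁻¹ - (((i : ℝ) / N) ^ β * T) ^ β⁻¹ ≤ T ^ β⁻¹ / N := by
  set c := T ^ β⁻¹
  set y := s ^ β⁻¹
  have hc : 0 < c := by positivity
  have hN' : (0 : ℝ) < N := by exact_mod_cast hN
  have grid_eq : ∀ x : ℝ, 0 ≤ x → (x / N) ^ β * T = (x / N * c) ^ β := fun x hx => by
    rw [Real.mul_rpow (by positivity) hc.le, Real.rpow_inv_rpow hT.le hβ.ne']
  have hs_eq : s = y ^ β := (Real.rpow_inv_rpow hs hβ.ne').symm
  have hy : 0 ≤ y := by positivity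
  have hyc : y < c := Real.rpow_lt_rpow hs hsT (by positivity)
  set i := ⌊N * y / c⌋₊
  have hi_le : (i : ℝ) ≤ N * y / c := Nat.floor_le (by positivity)
  have hi_lt : N * y / c < i + 1 := Nat.lt_floor_add_one _
  have hlo : (i : ℝ) / N * c ≤ y := by
    rw [le_div_iff₀ hc] at hi_le; rw [div_mul_eq_mul_div, div_le_iff₀ hN']; linarith
  have hhi : y < ((i : ℝ) + 1) / N * c := by
    rw [div_lt_iff₀ hc] at hi_lt; rw [div_mul_eq_mul_div, lt_div_iff₀ hN']; linarith
  refine ⟨i, ?_, ⟨?_, ?_⟩, ?_⟩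
  · refine Nat.floor_lt' hN.ne' |>.2 ?_
    rw [div_lt_iff₀ hc]; nlinarith
  · rw [grid_eq _ i.cast_nonneg, hs_eq]
    exact Real.rpow_le_rpow (by positivity) hlo hβ.le
  · rw [grid_eq _ (by positivity), hs_eq]
    exact Real.rpow_lt_rpow hy hhi hβ
  · rw [grid_eq _ i.cast_nonneg, Real.rpow_rpow_inv (by positivity) hβ.ne']
    rw [add_div, add_mul, div_mul_eq_mul_div 1, one_mul] at hhi
    linarith

theorem sub_nonneg_and_sq_sub_div_le_of_rpow_grid {T β : ℝ} (hT : 0 < T) (hβ : 1 ≤ β) {N : ℕ}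
    (hN : 0 < N) {τ : ℝ → ℝ}
    (hτ : ∀ i : ℕ, i < N → ∀ s ∈ Ico (((i : ℝ) / N) ^ β * T) ((((i : ℝ) + 1) / N) ^ β * T),
      τ s = ((i : ℝ) / N) ^ β * T)
    {s : ℝ} (hs : s ∈ Ioo 0 T) :
    0 ≤ s - τ s ∧ (s - τ s) ^ 2 / s ≤ β ^ 2 * s ^ (1 - 2 * β⁻¹) * (T ^ β⁻¹ / N) ^ 2 := by
  obtain ⟨i, hiN, hs_mem, hgap⟩ :=
    exists_mem_Ico_rpow_grid (β := β) hT (by positivity) hN hs.1.le hs.2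
  rw [hτ i hiN s hs_mem]
  exact ⟨sub_nonneg.2 hs_mem.1, sq_sub_div_le_of_rpow_inv_sub_le hβ hs.1 (by positivity)
    hs_mem.1 hgap⟩

theorem stmt13 (T β : ℝ) (hT : 0 < T) (hβ : 1 < β) :
    ∃ C : ℝ, ∀ N : ℕ, 1 ≤ N → ∀ τ : ℝ → ℝ,
      (∀ i : ℕ, i < N → ∀ s ∈ Set.Ico (((i : ℝ) / N) ^ β * T) ((((i : ℝ) + 1) / N) ^ β * T),
        τ s = ((i : ℝ) / N) ^ β * T) →
      ∫ s in (0 : ℝ)..T, min ((s - τ s) ^ 2 / s + 1 / (N : ℝ) ^ 2) (s - τ s) ≤ C / (N : ℝ) ^ 2 := by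
  have hγ : -1 < 1 - 2 * β⁻¹ := by
    have : β⁻¹ < 1 := inv_lt_one_of_one_lt₀ hβ
    linarith
  set G : ℝ → ℝ := fun s => β ^ 2 * s ^ (1 - 2 * β⁻¹) * (T ^ β⁻¹) ^ 2 + 1
  have hG : IntervalIntegrable G volume 0 T :=
    (((intervalIntegral.intervalIntegrable_rpow' hγ).const_mul _).mul_const _).add
      intervalIntegrable_const
  refine ⟨∫ s in (0 : ℝ)..T, G s, fun N hN τ hτ => ?_⟩
  simp only [intervalIntegral.integral_of_le hT.le, integral_Ioc_eq_integral_Ioo,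
    ← integral_div]
  refine integral_mono_of_nonneg (ae_restrict_of_forall_mem measurableSet_Ioo fun s hs => ?_)
    ((hG.1.mono_set Ioo_subset_Ioc_self).div_const _)
    (ae_restrict_of_forall_mem measurableSet_Ioo fun s hs => ?_)
  all_goals
    obtain ⟨hnonneg, hsq⟩ := sub_nonneg_and_sq_sub_div_le_of_rpow_grid hT hβ.le hN hτ hs
  · exact le_min (by have := hs.1; positivity) hnonneg
  · calc _ ≤ (s - τ s) ^ 2 / s + 1 / (N : ℝ) ^ 2 := min_le_left _ _
      _ ≤ β ^ 2 * s ^ (1 - 2 * β⁻¹) * (T ^ β⁻¹ / N) ^ 2 + 1 / (N : ℝ) ^ 2 := by gcongr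
      _ = G s / (N : ℝ) ^ 2 := by simp only [G]; ring
end
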